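/- arXiv:1005.3258 — 6 statements merged into one kernel-verified Lean document; each statement's English description precedes it below -/
import Mathlib

section
/- Fix α,β∈ℝ with α≠1, let Y_{α,β}(x,y)=(((1+α)/2)x+((α−1)/2)(y+β), ((α−1)/2)x+((1+α)/2)(y+β)) and f(x,y)=y. Then on the x-axis Σ the field Y_{α,β} has exactly one tangency point, namely i=(i₁,0) with i₁=(1+α)β/(1−α): one has Y_{α,β}.f(x,0)=((α−1)/2)(x−i₁), which vanishes iff x=i₁, and at the tangency point (Y_{α,β})².f(i₁,0)=−αβ. In particular, if α<0 then (i₁,0) is a Σ-fold of Y_{α,β} which is invisible (for the field acting in y≤0) when β>0 and visible when β<0. -/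
lemma fderiv_affine_prod_apply (a b c : ℝ) (p v : ℝ × ℝ) :
    fderiv ℝ (fun q : ℝ × ℝ => a * q.1 + b * (q.2 + c)) p v = a * v.1 + b * v.2 := by
  have hL : HasFDerivAt (fun q : ℝ × ℝ => a * q.1 + b * (q.2 + c))
      (a • ContinuousLinearMap.fst ℝ ℝ ℝ + b • ContinuousLinearMap.snd ℝ ℝ ℝ) p := by
    simpa only [Pi.add_apply, Pi.smul_apply, smul_eq_mul, mul_add, ← add_assoc] using
      (((hasFDerivAt_fst.const_smul a).add (hasFDerivAt_snd.const_smul b)).add_const (b * c))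
  simp [hL.fderiv]

/-- For α ≠ 1, Y_{α,β} has exactly one tangency point i = (i₁,0) on the
x-axis, with i₁ = (1+α)β/(1-α); moreover Y².f(i₁,0) = -αβ, so for α < 0 the
fold is invisible (for a field in y ≤ 0) when β > 0 and visible when β < 0. -/
theorem stmt_5 (α β : ℝ) (hα : α ≠ 1) :
    let Y : ℝ × ℝ → ℝ × ℝ := fun p =>
      (((1 + α) / 2) * p.1 + ((α - 1) / 2) * (p.2 + β),
       ((α - 1) / 2) * p.1 + ((1 + α) / 2) * (p.2 + β))
    let Yf : ℝ × ℝ → ℝ := fun p => (Y p).2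
    let Y2f : ℝ × ℝ → ℝ := fun p => fderiv ℝ Yf p (Y p)
    let i₁ : ℝ := (1 + α) * β / (1 - α)
    (∀ x : ℝ, Yf (x, 0) = ((α - 1) / 2) * (x - i₁)) ∧
    (∀ x : ℝ, Yf (x, 0) = 0 ↔ x = i₁) ∧
    Y2f (i₁, 0) = -α * β ∧
    (α < 0 → (0 < β → 0 < -α * β) ∧ (β < 0 → -α * β < 0)) := by
  intro Y Yf Y2f i₁
  have h1α : 1 - α ≠ 0 := sub_ne_zero.mpr hα.symm
  have hYf : ∀ x : ℝ, Yf (x, 0) = ((α - 1) / 2) * (x - i₁) := fun x => by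
    simp only [Yf, Y, i₁]
    field_simp
    ring
  refine ⟨hYf, fun x => ?_, ?_, fun hα0 => ⟨fun hβ => ?_, fun hβ => ?_⟩⟩
  · have hslope : (α - 1) / 2 ≠ 0 := div_ne_zero (sub_ne_zero.mpr hα) two_ne_zero
    rw [hYf, mul_eq_zero, sub_eq_zero, or_iff_right hslope]
  · simp only [Y2f, Yf, Y, fderiv_affine_prod_apply, i₁]
    field_simp
    ring
  · exact mul_pos (neg_pos.mpr hα0) hβ
  · exact mul_neg_of_pos_of_neg (neg_pos.mpr hα0) hβ
end

section
/- Fix λ,α,β∈ℝ with α<1, let X^i_λ(x,y)=(1,−(x−λ)), Y_{α,β} as below, f(x,y)=y, and set i₁=(1+α)β/(1−α). Then for every x∈ℝ: (X^i_λ.f)(x,0)·(Y_{α,β}.f)(x,0)=((1−α)/2)(x−λ)(x−i₁). Consequently, for the non-smooth field Z^i_{λ,α,β}=(X^i_λ,Y_{α,β}): the point (x,0) is a sliding point (X.f<0 and Y.f>0) iff λ<x<i₁; it is an escaping point (X.f>0 and Y.f<0) iff i₁<x<λ; and it is a sewing point (X.f·Y.f>0) iff x lies strictly outside the closed interval with endpoints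 λ and i₁. -/
/-- Partition of Σ for Z^i_{λ,α,β}: on the x-axis,
(X^i_λ.f)(Y_{α,β}.f) = ((1-α)/2)(x-λ)(x-i₁); sliding iff λ < x < i₁,
escaping iff i₁ < x < λ, sewing iff x is strictly outside the closed interval
with endpoints λ and i₁. -/
theorem stmt_7 (lam α β : ℝ) (hα : α < 1) :
    let Xf : ℝ → ℝ := fun x => -(x - lam)
    let Yf : ℝ → ℝ := fun x => ((α - 1) / 2) * x + ((1 + α) / 2) * β
    let i₁ : ℝ := (1 + α) * β / (1 - α)
    (∀ x : ℝ, Xf x * Yf x = ((1 - α) / 2) * (x - lam) * (x - i₁)) ∧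
    (∀ x : ℝ, (Xf x < 0 ∧ 0 < Yf x) ↔ (lam < x ∧ x < i₁)) ∧
    (∀ x : ℝ, (0 < Xf x ∧ Yf x < 0) ↔ (i₁ < x ∧ x < lam)) ∧
    (∀ x : ℝ, 0 < Xf x * Yf x ↔ x ∉ Set.Icc (min lam i₁) (max lam i₁)) := by
  intro Xf Yf i₁
  have hpos : (0:ℝ) < 1 - α := by linarith
  have hne : (1:ℝ) - α ≠ 0 := ne_of_gt hpos
  have hY : ∀ x : ℝ, Yf x = ((α - 1) / 2) * (x - i₁) := by
    intro x
    simp only [Yf, i₁]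
    field_simp
    ring
  have hX : ∀ x : ℝ, Xf x = -(x - lam) := fun x => rfl
  have hYpos : ∀ x : ℝ, 0 < Yf x ↔ x < i₁ := by
    intro x
    rw [hY]
    constructor
    · intro h
      nlinarith
    · intro h
      nlinarith
  have hYneg : ∀ x : ℝ, Yf x < 0 ↔ i₁ < x := by
    intro x
    rw [hY]
    constructor
    · intro h
      nlinarith
    · intro h
      nlinarith
  refine ⟨?_, ?_, ?_, ?_⟩
  · intro x
    rw [hY]
    ring
  · intro x
    rw [hYpos]
    simp only [hX]
    constructor
    · rintro ⟨h1, h2⟩; exact ⟨by linarith, h2⟩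
    · rintro ⟨h1, h2⟩; exact ⟨by linarith, h2⟩
  · intro x
    rw [hYneg]
    simp only [hX]
    constructor
    · rintro ⟨h1, h2⟩; exact ⟨h2, by linarith⟩
    · rintro ⟨h1, h2⟩; exact ⟨by linarith, h1⟩
  · intro x
    rw [mul_pos_iff, hYpos, hYneg]
    simp only [hX, Set.mem_Icc, not_and_or, not_le, neg_sub, sub_pos, sub_neg,
      lt_min_iff, max_lt_iff]
end

section
/- Fix α,β∈ℝ with α<1, set i₁=(1+α)β/(1−α), and take λ=i₁ in Z^i_{λ,α,β}=(X^i_λ,Y_{α,β}). Then for every x∈ℝ: (X^i_{i₁}.f)(x,0)·(Y_{α,β}.f)(x,0)=((1−α)/2)(x−i₁)²≥0, with equality iff x=i₁. Hence every point of Σ other than (i₁,0) is a sewing point of Z^i_{i₁,α,β}, and (i₁,0) is the common tangency point of X^i_{i₁} and Y_{α,β}; in particular the sliding and escaping regions are empty. -/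
/-- Fold-fold degenerate configuration (λ = i₁): on the x-axis
(X^i_{i₁}.f)(Y_{α,β}.f) = ((1-α)/2)(x-i₁)² ≥ 0, with equality iff x = i₁;
every point of Σ other than (i₁,0) is a sewing point and (i₁,0) is the common
tangency, so sliding and escaping regions are empty. -/
theorem stmt_13 (α β : ℝ) (hα : α < 1) :
    let i₁ : ℝ := (1 + α) * β / (1 - α)
    let Xf : ℝ → ℝ := fun x => -(x - i₁)
    let Yf : ℝ → ℝ := fun x => ((α - 1) / 2) * x + ((1 + α) / 2) * β
    (∀ x : ℝ, Xf x * Yf x = ((1 - α) / 2) * (x - i₁) ^ 2) ∧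
    (∀ x : ℝ, 0 ≤ Xf x * Yf x) ∧
    (∀ x : ℝ, Xf x * Yf x = 0 ↔ x = i₁) ∧
    (∀ x : ℝ, x ≠ i₁ → 0 < Xf x * Yf x) ∧
    Xf i₁ = 0 ∧ Yf i₁ = 0 := by
  intro i₁ Xf Yf
  have hne : (1 : ℝ) - α ≠ 0 := by linarith
  have hpos : (0 : ℝ) < (1 - α) / 2 := by linarith
  have key : ∀ x : ℝ, Xf x * Yf x = ((1 - α) / 2) * (x - i₁) ^ 2 := by
    intro x
    simp only [Xf, Yf, i₁]
    field_simp
    ring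
  refine ⟨key, ?_, ?_, ?_, ?_, ?_⟩
  · intro x; rw [key x]; positivity
  · intro x
    rw [key x]
    constructor
    · intro h
      have := mul_eq_zero.mp h
      rcases this with h | h
      · exact absurd h (ne_of_gt hpos)
      · have : x - i₁ = 0 := by
          exact pow_eq_zero_iff (by norm_num) |>.mp h
        linarith
    · intro h; rw [h]; ring
  · intro x hx
    rw [key x]
    have : x - i₁ ≠ 0 := sub_ne_zero.mpr hx
    positivity
  · simp [Xf]
  · simp only [Yf, i₁]
    field_simp
    ring
end

section
/- Fix β>0 and consider Z^i_{0,−1,β}=(X^i_0,Y_{−1,β}) with X^i_0(x,y)=(1,−x) and Y_{−1,β}(x,y)=(−(y+β),−x). Then the origin is a Σ-center: for every x₀ with −β<x₀<0 there exist T₁=−2x₀>0, T₂=log((β−x₀)/(β+x₀))>0 and C¹ curves γ₁:[0,T₁]→ℝ², γ₂:[0,T₂]→ℝ², explicitly γ₁(t)=(x₀+t, −x₀t−t²/2) and γ₂(t)=(((β−x₀)e^{−t}−(β+x₀)e^{t})/2, −β+((β−x₀)e^{−t}+(β+x₀)e^{t})/2), such that: γ₁'(t)=X^i_0(γ₁(t))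 and γ₂'(t)=Y_{−1,β}(γ₂(t)); γ₁(0)=(x₀,0), γ₁(T₁)=(−x₀,0)=γ₂(0), γ₂(T₂)=(x₀,0); the second coordinate of γ₁(t) is strictly positive for 0<t<T₁ and the second coordinate of γ₂(t) is strictly negative for 0<t<T₂. Hence the concatenation of γ₁ and γ₂ is a closed canard cycle of kind I through (x₀,0), and these cycles form a one-parameter family encircling the origin. -/
/-!
The upper field `(1, -x)` integrates to the parabolas `y = (x₀² - x²) / 2`, which leave
`(x₀, 0)` upwards and return to `Σ` at `(-x₀, 0)`. The lower field is a linear saddle centred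
at `(0, -β)`; its orbit from `(-x₀, 0)` is `x = (a e^{-t} - b e^t) / 2`, `y + β = (a e^{-t} + b e^t) / 2`
with `a = β - x₀`, `b = β + x₀`, and it comes back to `Σ` exactly when `e^t ∈ {1, a / b}`.
Since `-β < x₀ < 0` forces `a > b > 0`, the return time `log (a / b)` is positive and the two
arcs close up.
-/

open Real

namespace FoldSaddle

noncomputable section

def foldField (p : ℝ × ℝ) : ℝ × ℝ := (1, -p.1)

def saddleField (β : ℝ) (p : ℝ × ℝ) : ℝ × ℝ := (-(p.2 + β), -p.1)

def foldOrbit (x₀ t : ℝ) : ℝ × ℝ := (x₀ + t, -x₀ * t - t ^ 2 / 2)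

def saddleOrbit (β x₀ t : ℝ) : ℝ × ℝ :=
  (((β - x₀) * exp (-t) - (β + x₀) * exp t) / 2,
   -β + ((β - x₀) * exp (-t) + (β + x₀) * exp t) / 2)

theorem hasDerivAt_foldOrbit (x₀ t : ℝ) :
    HasDerivAt (foldOrbit x₀) (foldField (foldOrbit x₀ t)) t := by
  have hx : HasDerivAt (fun t : ℝ => x₀ + t) 1 t := (hasDerivAt_id t).const_add x₀
  have hy : HasDerivAt (fun t : ℝ => -x₀ * t - t ^ 2 / 2) (-(x₀ + t)) t := by
    have := ((hasDerivAt_id t).const_mul (-x₀)).sub ((hasDerivAt_pow 2 t).div_const 2)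
    exact this.congr_deriv (by simp only [mul_one]; ring)
  exact hx.prodMk hy

theorem hasDerivAt_saddleOrbit (β x₀ t : ℝ) :
    HasDerivAt (saddleOrbit β x₀) (saddleField β (saddleOrbit β x₀ t)) t := by
  have hneg : HasDerivAt (fun t : ℝ => exp (-t)) (-exp (-t)) t := by
    simpa using (hasDerivAt_neg t).exp
  have hpos : HasDerivAt (fun t : ℝ => exp t) (exp t) t := hasDerivAt_exp t
  have hx := ((hneg.const_mul (β - x₀)).sub (hpos.const_mul (β + x₀))).div_const 2
  have hy := (((hneg.const_mul (β - x₀)).add (hpos.const_mul (β + x₀))).div_const 2).const_add (-β)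
  refine (hx.prodMk hy).congr_deriv ?_
  simp only [saddleField, saddleOrbit, Prod.mk.injEq]
  constructor <;> ring

theorem foldOrbit_zero (x₀ : ℝ) : foldOrbit x₀ 0 = (x₀, 0) := by
  simp [foldOrbit]

theorem foldOrbit_neg_two_mul (x₀ : ℝ) : foldOrbit x₀ (-2 * x₀) = (-x₀, 0) := by
  simp only [foldOrbit, Prod.mk.injEq]
  constructor <;> ring

theorem foldOrbit_snd_pos {x₀ t : ℝ} (ht : 0 < t) (hT : t < -2 * x₀) :
    0 < (foldOrbit x₀ t).2 := by
  have : (foldOrbit x₀ t).2 = t * (-2 * x₀ - t) / 2 := by simp only [foldOrbit]; ring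
  rw [this]
  have : 0 < -2 * x₀ - t := by linarith
  positivity

theorem saddleOrbit_zero (β x₀ : ℝ) : saddleOrbit β x₀ 0 = (-x₀, 0) := by
  simp only [saddleOrbit, neg_zero, exp_zero, mul_one, Prod.mk.injEq]
  constructor <;> ring

theorem saddleOrbit_log_div {β x₀ : ℝ} (ha : 0 < β - x₀) (hb : 0 < β + x₀) :
    saddleOrbit β x₀ (log ((β - x₀) / (β + x₀))) = (x₀, 0) := by
  have hexp : exp (log ((β - x₀) / (β + x₀))) = (β - x₀) / (β + x₀) := exp_log (by positivity)
  simp only [saddleOrbit, exp_neg, hexp, inv_div, Prod.mk.injEq]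
  constructor <;> field_simp <;> ring

theorem saddleOrbit_snd_eq (β x₀ t : ℝ) :
    (saddleOrbit β x₀ t).2 = ((β + x₀) * exp t - (β - x₀)) * (exp t - 1) / (2 * exp t) := by
  simp only [saddleOrbit, exp_neg]
  field_simp
  ring

theorem saddleOrbit_snd_neg {β x₀ t : ℝ} (ha : 0 < β - x₀) (hb : 0 < β + x₀) (ht : 0 < t)
    (hT : t < log ((β - x₀) / (β + x₀))) : (saddleOrbit β x₀ t).2 < 0 := by
  have hret : (β + x₀) * exp t < β - x₀ := by
    rw [← lt_div_iff₀' hb]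
    exact (lt_log_iff_exp_lt (by positivity)).mp hT
  have hleave : 1 < exp t := one_lt_exp_iff.mpr ht
  rw [saddleOrbit_snd_eq]
  exact div_neg_of_neg_of_pos (mul_neg_of_neg_of_pos (by linarith) (by linarith)) (by positivity)

end

end FoldSaddle

open FoldSaddle in
theorem stmt_14_general (β x₀ : ℝ) (h1 : -β < x₀) (h2 : x₀ < 0) :
    let X : ℝ × ℝ → ℝ × ℝ := fun p => (1, -p.1)
    let Y : ℝ × ℝ → ℝ × ℝ := fun p => (-(p.2 + β), -p.1)
    let T₁ : ℝ := -2 * x₀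
    let T₂ : ℝ := Real.log ((β - x₀) / (β + x₀))
    let γ₁ : ℝ → ℝ × ℝ := fun t => (x₀ + t, -x₀ * t - t ^ 2 / 2)
    let γ₂ : ℝ → ℝ × ℝ := fun t =>
      (((β - x₀) * Real.exp (-t) - (β + x₀) * Real.exp t) / 2,
       -β + ((β - x₀) * Real.exp (-t) + (β + x₀) * Real.exp t) / 2)
    0 < T₁ ∧ 0 < T₂ ∧
    (∀ t : ℝ, HasDerivAt γ₁ (X (γ₁ t)) t) ∧
    (∀ t : ℝ, HasDerivAt γ₂ (Y (γ₂ t)) t) ∧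
    γ₁ 0 = (x₀, 0) ∧ γ₁ T₁ = (-x₀, 0) ∧
    γ₂ 0 = (-x₀, 0) ∧ γ₂ T₂ = (x₀, 0) ∧
    (∀ t : ℝ, 0 < t → t < T₁ → 0 < (γ₁ t).2) ∧
    (∀ t : ℝ, 0 < t → t < T₂ → (γ₂ t).2 < 0) := by
  intro X Y T₁ T₂ γ₁ γ₂
  have hb : 0 < β + x₀ := by linarith
  have ha : 0 < β - x₀ := by linarith
  have hT₂ : 0 < T₂ := log_pos ((one_lt_div hb).mpr (by linarith))
  exact ⟨by linarith, hT₂, hasDerivAt_foldOrbit x₀, hasDerivAt_saddleOrbit β x₀,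
    foldOrbit_zero x₀, foldOrbit_neg_two_mul x₀, saddleOrbit_zero β x₀, saddleOrbit_log_div ha hb,
    fun _ => foldOrbit_snd_pos, fun _ => saddleOrbit_snd_neg ha hb⟩

/-- Case 12₁ of Theorem 1: the origin is a Σ-center for Z^i_{0,-1,β}, β > 0.
For each x₀ ∈ (-β,0) explicit times T₁, T₂ > 0 and arcs γ₁ of X^i_0 (in y ≥ 0)
and γ₂ of Y_{-1,β} (in y ≤ 0) concatenate into a closed canard cycle of kind I
through (x₀,0). -/
theorem stmt_14 (β x₀ : ℝ) (hβ : 0 < β) (h1 : -β < x₀) (h2 : x₀ < 0) :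
    let X : ℝ × ℝ → ℝ × ℝ := fun p => (1, -p.1)
    let Y : ℝ × ℝ → ℝ × ℝ := fun p => (-(p.2 + β), -p.1)
    let T₁ : ℝ := -2 * x₀
    let T₂ : ℝ := Real.log ((β - x₀) / (β + x₀))
    let γ₁ : ℝ → ℝ × ℝ := fun t => (x₀ + t, -x₀ * t - t ^ 2 / 2)
    let γ₂ : ℝ → ℝ × ℝ := fun t =>
      (((β - x₀) * Real.exp (-t) - (β + x₀) * Real.exp t) / 2,
       -β + ((β - x₀) * Real.exp (-t) + (β + x₀) * Real.exp t) / 2)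
    0 < T₁ ∧ 0 < T₂ ∧
    (∀ t : ℝ, HasDerivAt γ₁ (X (γ₁ t)) t) ∧
    (∀ t : ℝ, HasDerivAt γ₂ (Y (γ₂ t)) t) ∧
    γ₁ 0 = (x₀, 0) ∧ γ₁ T₁ = (-x₀, 0) ∧
    γ₂ 0 = (-x₀, 0) ∧ γ₂ T₂ = (x₀, 0) ∧
    (∀ t : ℝ, 0 < t → t < T₁ → 0 < (γ₁ t).2) ∧
    (∀ t : ℝ, 0 < t → t < T₂ → (γ₂ t).2 < 0) :=
  stmt_14_general β x₀ h1 h2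
end

section
/- Fix β>0 and 0<x₀<β, and let Y_{−1,β}(x,y)=(−(y+β),−x). Then with T=log((β+x₀)/(β−x₀))>0 the curve γ(t)=(((x₀+β)e^{−t}+(x₀−β)e^{t})/2, −β+((x₀+β)e^{−t}−(x₀−β)e^{t})/2) satisfies γ'(t)=Y_{−1,β}(γ(t)) for all t, γ(0)=(x₀,0), the second coordinate of γ(t) is strictly negative for 0<t<T, and γ(T)=(−x₀,0). Hence the orbit of Y_{−1,β} in the half-plane y≤0 starting at (x₀,0) with 0<x₀<β returns to the x-axis exactly at (−x₀,0): the half-return map of Y_{−1,β} on (0,β) is x↦−x. (The orbit lies on the hyperbola x²−(y+β)²=x₀²−β².) -/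
/-!
In the coordinates `(x, y + β)` the field `Y_{-1,β}` is the linear saddle `(u, v) ↦ (-v, -u)`,
whose flow is a hyperbolic rotation: the orbit through `(x₀, β)` is
`(x₀ cosh t - β sinh t, β cosh t - x₀ sinh t)`, and it stays on the hyperbola
`u² - v² = x₀² - β²` because `cosh² - sinh² = 1`. Multiplying the second coordinate `y` by `2 eᵗ`
factors it as `(eᵗ - 1) ((β - x₀) eᵗ - (β + x₀))`, so `y` vanishes exactly at `t = 0` and at
`eᵗ = (β + x₀) / (β - x₀)` and is negative in between.
-/

open Real

namespace SaddleHalfReturn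

variable (β x₀ : ℝ)

/-- The orbit of `Y_{-1,β}(x, y) = (-(y + β), -x)` through `(x₀, 0)`. -/
noncomputable def orbit (t : ℝ) : ℝ × ℝ :=
  (x₀ * cosh t - β * sinh t, -β + β * cosh t - x₀ * sinh t)

noncomputable def returnTime : ℝ := log ((β + x₀) / (β - x₀))

theorem orbit_eq_exp (t : ℝ) :
    orbit β x₀ t =
      (((x₀ + β) * exp (-t) + (x₀ - β) * exp t) / 2,
       -β + ((x₀ + β) * exp (-t) - (x₀ - β) * exp t) / 2) := by
  simp only [orbit, cosh_eq, sinh_eq, Prod.mk.injEq]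
  constructor <;> ring

theorem hasDerivAt_orbit (t : ℝ) :
    HasDerivAt (orbit β x₀) (-((orbit β x₀ t).2 + β), -(orbit β x₀ t).1) t := by
  have hx := ((hasDerivAt_cosh t).const_mul x₀).sub ((hasDerivAt_sinh t).const_mul β)
  have hy := (((hasDerivAt_cosh t).const_mul β).const_add (-β)).sub
    ((hasDerivAt_sinh t).const_mul x₀)
  refine (hx.prodMk hy).congr_deriv ?_
  simp only [orbit, Prod.mk.injEq]
  constructor <;> ring

theorem orbit_zero : orbit β x₀ 0 = (x₀, 0) := by
  simp [orbit]

theorem orbit_mem_hyperbola (t : ℝ) :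
    (orbit β x₀ t).1 ^ 2 - ((orbit β x₀ t).2 + β) ^ 2 = x₀ ^ 2 - β ^ 2 := by
  simp only [orbit]
  linear_combination (x₀ ^ 2 - β ^ 2) * cosh_sq t

variable {β x₀}

theorem exp_returnTime (h1 : -β < x₀) (h2 : x₀ < β) :
    exp (returnTime β x₀) = (β + x₀) / (β - x₀) :=
  exp_log (div_pos (by linarith) (by linarith))

theorem returnTime_pos (h1 : 0 < x₀) (h2 : x₀ < β) : 0 < returnTime β x₀ :=
  log_pos ((one_lt_div (by linarith)).2 (by linarith))

theorem two_mul_exp_mul_orbit_snd (t : ℝ) :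
    2 * exp t * (orbit β x₀ t).2 = (exp t - 1) * ((β - x₀) * exp t - (β + x₀)) := by
  rw [orbit_eq_exp, exp_neg]
  field_simp
  ring

theorem orbit_snd_neg (h1 : -β < x₀) (h2 : x₀ < β) {t : ℝ} (ht : 0 < t)
    (htT : t < returnTime β x₀) : (orbit β x₀ t).2 < 0 := by
  have hexp_gt_one : 1 < exp t := one_lt_exp_iff.2 ht
  have hexp_lt : exp t < (β + x₀) / (β - x₀) := by
    rw [← exp_returnTime h1 h2]
    exact exp_lt_exp.2 htT
  have hfactor : (β - x₀) * exp t - (β + x₀) < 0 := by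
    rw [lt_div_iff₀ (by linarith)] at hexp_lt
    linarith
  have hprod : 2 * exp t * (orbit β x₀ t).2 < 0 := by
    rw [two_mul_exp_mul_orbit_snd]
    exact mul_neg_of_pos_of_neg (by linarith) hfactor
  exact neg_of_mul_neg_right hprod (by positivity)

theorem orbit_returnTime (h1 : -β < x₀) (h2 : x₀ < β) :
    orbit β x₀ (returnTime β x₀) = (-x₀, 0) := by
  have hb1 : β - x₀ ≠ 0 := by linarith
  have hb2 : β + x₀ ≠ 0 := by linarith
  rw [orbit_eq_exp, exp_neg, exp_returnTime h1 h2, inv_div, Prod.mk.injEq]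
  constructor <;> field_simp <;> ring

end SaddleHalfReturn

open SaddleHalfReturn in
theorem stmt_16_general (β x₀ : ℝ) (h1 : 0 < x₀) (h2 : x₀ < β) :
    let Y : ℝ × ℝ → ℝ × ℝ := fun p => (-(p.2 + β), -p.1)
    let T : ℝ := Real.log ((β + x₀) / (β - x₀))
    let γ : ℝ → ℝ × ℝ := fun t =>
      (((x₀ + β) * Real.exp (-t) + (x₀ - β) * Real.exp t) / 2,
       -β + ((x₀ + β) * Real.exp (-t) - (x₀ - β) * Real.exp t) / 2)
    0 < T ∧
    (∀ t : ℝ, HasDerivAt γ (Y (γ t)) t) ∧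
    γ 0 = (x₀, 0) ∧
    (∀ t : ℝ, 0 < t → t < T → (γ t).2 < 0) ∧
    γ T = (-x₀, 0) ∧
    (∀ t : ℝ, (γ t).1 ^ 2 - ((γ t).2 + β) ^ 2 = x₀ ^ 2 - β ^ 2) := by
  intro Y T γ
  have hγ : γ = orbit β x₀ := funext fun t => (orbit_eq_exp β x₀ t).symm
  have h1' : -β < x₀ := by linarith
  rw [hγ]
  exact ⟨returnTime_pos h1 h2, hasDerivAt_orbit β x₀, orbit_zero β x₀,
    fun _ => orbit_snd_neg h1' h2, orbit_returnTime h1' h2, orbit_mem_hyperbola β x₀⟩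

/-- The half-return map of Y_{-1,β}(x,y) = (-(y+β), -x) on (0,β) is x ↦ -x:
the orbit starting at (x₀,0) with 0 < x₀ < β stays in y < 0 for 0 < t < T
with T = log((β+x₀)/(β-x₀)) and returns to the x-axis at (-x₀,0); it lies on
the hyperbola x² - (y+β)² = x₀² - β². -/
theorem stmt_16 (β x₀ : ℝ) (hβ : 0 < β) (h1 : 0 < x₀) (h2 : x₀ < β) :
    let Y : ℝ × ℝ → ℝ × ℝ := fun p => (-(p.2 + β), -p.1)
    let T : ℝ := Real.log ((β + x₀) / (β - x₀))
    let γ : ℝ → ℝ × ℝ := fun t =>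
      (((x₀ + β) * Real.exp (-t) + (x₀ - β) * Real.exp t) / 2,
       -β + ((x₀ + β) * Real.exp (-t) - (x₀ - β) * Real.exp t) / 2)
    0 < T ∧
    (∀ t : ℝ, HasDerivAt γ (Y (γ t)) t) ∧
    γ 0 = (x₀, 0) ∧
    (∀ t : ℝ, 0 < t → t < T → (γ t).2 < 0) ∧
    γ T = (-x₀, 0) ∧
    (∀ t : ℝ, (γ t).1 ^ 2 - ((γ t).2 + β) ^ 2 = x₀ ^ 2 - β ^ 2) :=
  stmt_16_general β x₀ h1 h2
end

section
/- Fix λ∈ℝ, β>0 and i₁∈ℝ with 0<|i₁|<β. Define the affine maps φ_X(x)=−x+2λ and φ_Y(x)=(x(i₁+β)−2i₁²)/(β−i₁), and the first return map η=φ_Y∘φ_X. Then η is affine with constant derivative η'=−(i₁+β)/(β−i₁), satisfying |η'|>1 if i₁>0 and |η'|<1 if i₁<0, and η has the unique fixed point x_Q=(λ(i₁+β)−i₁²)/β. Consequently, in the non-smooth system Z^i_{λ,α,β} with i₁=(1+α)β/(1−α), the canard cycle through Q=(x_Q,0) is hyperbolic: a repeller when −1<α (so i₁>0, Case 13₂ of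 Theorem 2) and an attractor when α<−1 (so i₁<0, Case 13₃ of Theorem 3). -/
/-- Hyperbolicity of the canard cycle in Cases 13₂ and 13₃: the first return
map η = φ_Y ∘ φ_X is affine with derivative -(i₁+β)/(β-i₁), of absolute value
> 1 if i₁ > 0 and < 1 if i₁ < 0, and with unique fixed point
x_Q = (λ(i₁+β) - i₁²)/β; moreover i₁ = (1+α)β/(1-α) is positive for
-1 < α < 1 and negative for α < -1. -/
theorem stmt_18 (lam β i₁ : ℝ) (hβ : 0 < β) (h0 : i₁ ≠ 0) (h1 : |i₁| < β) :
    let φX : ℝ → ℝ := fun x => -x + 2 * lam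
    let φY : ℝ → ℝ := fun x => (x * (i₁ + β) - 2 * i₁ ^ 2) / (β - i₁)
    let η : ℝ → ℝ := φY ∘ φX
    let xQ : ℝ := (lam * (i₁ + β) - i₁ ^ 2) / β
    (∀ x : ℝ, HasDerivAt η (-(i₁ + β) / (β - i₁)) x) ∧
    (0 < i₁ → 1 < |(-(i₁ + β) / (β - i₁))|) ∧
    (i₁ < 0 → |(-(i₁ + β) / (β - i₁))| < 1) ∧
    η xQ = xQ ∧
    (∀ x : ℝ, η x = x → x = xQ) ∧
    (∀ α : ℝ, α < 1 → i₁ = (1 + α) * β / (1 - α) →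
      ((-1 < α → 0 < i₁) ∧ (α < -1 → i₁ < 0))) := by
  intro φX φY η xQ
  have hlt : i₁ < β := lt_of_abs_lt h1
  have hgt : -β < i₁ := neg_lt_of_abs_lt h1
  have hd : (0:ℝ) < β - i₁ := by linarith
  have hn : (0:ℝ) < i₁ + β := by linarith
  have habs : |(-(i₁ + β) / (β - i₁))| = (i₁ + β) / (β - i₁) := by
    rw [abs_div, abs_neg, abs_of_pos hn, abs_of_pos hd]
  refine ⟨?_, ?_, ?_, ?_, ?_, ?_⟩
  · intro x
    have h : HasDerivAt η ((-1 * (i₁ + β)) / (β - i₁)) x := by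
      exact ((((hasDerivAt_id x).neg.add_const (2 * lam)).mul_const
        (i₁ + β)).sub_const (2 * i₁ ^ 2)).div_const (β - i₁)
    convert h using 1; ring
  · intro hi
    rw [habs, lt_div_iff₀ hd]; linarith
  · intro hi
    rw [habs, div_lt_one hd]; linarith
  · show ((-xQ + 2 * lam) * (i₁ + β) - 2 * i₁ ^ 2) / (β - i₁) = xQ
    show ((-((lam * (i₁ + β) - i₁ ^ 2) / β) + 2 * lam) * (i₁ + β) - 2 * i₁ ^ 2) / (β - i₁)
      = (lam * (i₁ + β) - i₁ ^ 2) / β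
    field_simp
    ring
  · intro x hx
    have hx' : ((-x + 2 * lam) * (i₁ + β) - 2 * i₁ ^ 2) / (β - i₁) = x := hx
    rw [div_eq_iff hd.ne'] at hx'
    show x = (lam * (i₁ + β) - i₁ ^ 2) / β
    rw [eq_div_iff hβ.ne']
    nlinarith [hx']
  · intro α hα hi
    have h1α : (0:ℝ) < 1 - α := by linarith
    constructor
    · intro h
      rw [hi]
      apply div_pos _ h1α
      nlinarith
    · intro h
      rw [hi]
      apply div_neg_of_neg_of_pos _ h1α
      nlinarith
end
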